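/- Let R, W₁, …, W_K be n×n positive semidefinite complex matrices such that R − Σ_{k=1}^{K} W_k is positive semidefinite, and let h₁, …, h_K ∈ ℂⁿ satisfy h_kᴴ W_k h_k ≠ 0 for every k. Define W̃_k = (W_k h_k)(W_k h_k)ᴴ / (h_kᴴ W_k h_k) for each k. Then: (i) each W̃_k is positive semidefinite of rank 1; (ii) h_kᴴ W̃_k h_k = h_kᴴ W_k h_k for each k; and (iii) R − Σ_{k=1}^{K} W̃_k is positive semidefinite. -/

import Mathlib

open Matrix
open scoped ComplexOrder

private lemma vmv_mulVec {n : ℕ} (w u y : Fin n → ℂ) :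
    (vecMulVec w u) *ᵥ y = (u ⬝ᵥ y) • w := by
  funext i
  simp only [vecMulVec_apply, mulVec, dotProduct, Pi.smul_apply, smul_eq_mul, Finset.sum_mul]
  exact Finset.sum_congr rfl fun j _ => by ring

private lemma vmv_conjT {n : ℕ} (v : Fin n → ℂ) :
    (vecMulVec v (star v))ᴴ = vecMulVec v (star v) := by
  ext i j
  simp [conjTranspose_apply, vecMulVec_apply, mul_comm]

private lemma herm_conj {n : ℕ} {A : Matrix (Fin n) (Fin n) ℂ} (hA : A.IsHermitian)
    (x y : Fin n → ℂ) : star x ⬝ᵥ A *ᵥ y = star (star y ⬝ᵥ A *ᵥ x) := by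
  rw [star_dotProduct]
  congr 1
  rw [star_mulVec, ← dotProduct_mulVec, hA.eq]

private lemma cinv_pos {c : ℂ} (hc : 0 < c) : 0 < c⁻¹ := by
  have h1 : c = (c.re : ℂ) := by
    rw [Complex.lt_def] at hc
    exact Complex.ext_iff.2 ⟨rfl, by simpa using hc.2.symm⟩
  have h2 : 0 < c.re := by rw [Complex.lt_def] at hc; simpa using hc.1
  rw [h1, ← Complex.ofReal_inv]
  exact_mod_cast inv_pos.2 h2

private lemma quad_form {n : ℕ} (c : ℂ) (v y : Fin n → ℂ) :
    star y ⬝ᵥ (c • vecMulVec v (star v)) *ᵥ y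
      = c * ((star v ⬝ᵥ y) * (star y ⬝ᵥ v)) := by
  rw [smul_mulVec, vmv_mulVec, dotProduct_smul, dotProduct_smul,
    smul_eq_mul, smul_eq_mul]

section per_k
variable {n : ℕ} {A : Matrix (Fin n) (Fin n) ℂ} (hA : A.PosSemidef) {x : Fin n → ℂ}
  (hc : star x ⬝ᵥ A *ᵥ x ≠ 0)

include hA hc

private lemma c_pos : 0 < star x ⬝ᵥ A *ᵥ x := lt_of_le_of_ne (hA.dotProduct_mulVec_nonneg x) (Ne.symm hc)

omit hc in
private lemma cst : star (star x ⬝ᵥ A *ᵥ x) = star x ⬝ᵥ A *ᵥ x :=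
  (hA.dotProduct_mulVec_nonneg x).isSelfAdjoint.star_eq

omit hc in
private lemma cinvst : star ((star x ⬝ᵥ A *ᵥ x)⁻¹) = (star x ⬝ᵥ A *ᵥ x)⁻¹ := by
  rw [star_inv₀, cst hA]

private lemma Mt_psd :
    ((star x ⬝ᵥ A *ᵥ x)⁻¹ • vecMulVec (A *ᵥ x) (star (A *ᵥ x))).PosSemidef := by
  rw [posSemidef_iff_dotProduct_mulVec]
  constructor
  · rw [Matrix.IsHermitian, conjTranspose_smul, vmv_conjT, cinvst hA]
  · intro y
    rw [quad_form, star_dotProduct (A *ᵥ x) y]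
    exact mul_nonneg (cinv_pos (c_pos hA hc)).le (star_mul_self_nonneg _)

private lemma Mt_quad :
    star x ⬝ᵥ ((star x ⬝ᵥ A *ᵥ x)⁻¹ •
        vecMulVec (A *ᵥ x) (star (A *ᵥ x))) *ᵥ x = star x ⬝ᵥ A *ᵥ x := by
  rw [quad_form, star_dotProduct (A *ᵥ x) x, cst hA,
    ← mul_assoc, inv_mul_cancel₀ hc, one_mul]

private lemma Mt_rank :
    ((star x ⬝ᵥ A *ᵥ x)⁻¹ • vecMulVec (A *ᵥ x) (star (A *ᵥ x))).rank = 1 := by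
  set c := star x ⬝ᵥ A *ᵥ x with hcdef
  set v := A *ᵥ x with hvdef
  have hv : v ≠ 0 := fun h0 => hc (by rw [hcdef, h0, dotProduct_zero])
  have hvv : star v ⬝ᵥ v ≠ 0 := fun h0 => hv (dotProduct_star_self_eq_zero.mp h0)
  have hci : c⁻¹ ≠ 0 := inv_ne_zero hc
  have hrange : LinearMap.range (c⁻¹ • vecMulVec v (star v)).mulVecLin = ℂ ∙ v := by
    ext w
    simp only [LinearMap.mem_range, mulVecLin_apply, Submodule.mem_span_singleton]
    constructor
    · rintro ⟨y, rfl⟩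
      refine ⟨c⁻¹ * (star v ⬝ᵥ y), ?_⟩
      rw [smul_mulVec, vmv_mulVec, smul_smul]
    · rintro ⟨t, rfl⟩
      refine ⟨((c⁻¹ * (star v ⬝ᵥ v))⁻¹ * t) • v, ?_⟩
      rw [smul_mulVec, mulVec_smul, vmv_mulVec, smul_smul, smul_smul]
      congr 1
      field_simp
  rw [Matrix.rank, hrange, finrank_span_singleton hv]

omit hA hc in
private lemma expand_lemma {n : ℕ} (A : Matrix (Fin n) (Fin n) ℂ) (x y : Fin n → ℂ)
    (c a : ℂ) (hcdef : c = star x ⬝ᵥ A *ᵥ x) (ha : a = star y ⬝ᵥ A *ᵥ x)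
    (e1 : star x ⬝ᵥ A *ᵥ y = star a) (hcst : star c = c) :
    star (c • y - star a • x) ⬝ᵥ A *ᵥ (c • y - star a • x)
      = c * (c * (star y ⬝ᵥ A *ᵥ y) - a * star a) := by
  simp only [star_sub, star_smul, mulVec_sub, mulVec_smul, sub_dotProduct,
    dotProduct_sub, smul_dotProduct, dotProduct_smul, smul_eq_mul, star_star,
    e1, ← hcdef, ← ha, hcst]
  ring

omit hA hc in
private lemma scalar_ineq (c a Q : ℂ) (hc0 : c ≠ 0) (hcinv : 0 ≤ c⁻¹)
    (key : 0 ≤ c * (c * Q - a * star a)) : 0 ≤ Q - c⁻¹ * (star a * a) := by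
  have ht : 0 ≤ c * Q - a * star a := by
    have h2 := mul_nonneg hcinv key
    rwa [← mul_assoc, inv_mul_cancel₀ hc0, one_mul] at h2
  have hEq : Q - c⁻¹ * (star a * a) = c⁻¹ * (c * Q - a * star a) := by
    field_simp
  rw [hEq]
  exact mul_nonneg hcinv ht

private lemma key_sub :
    (A - (star x ⬝ᵥ A *ᵥ x)⁻¹ • vecMulVec (A *ᵥ x) (star (A *ᵥ x))).PosSemidef := by
  rw [posSemidef_iff_dotProduct_mulVec]
  constructor
  · rw [Matrix.IsHermitian, conjTranspose_sub, hA.1.eq, conjTranspose_smul, vmv_conjT,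
      cinvst hA]
  · intro y
    have hz := hA.dotProduct_mulVec_nonneg ((star x ⬝ᵥ A *ᵥ x) • y - star (star y ⬝ᵥ A *ᵥ x) • x)
    rw [expand_lemma A x y _ _ rfl rfl (herm_conj hA.1 x y) (cst hA)] at hz
    have main := scalar_ineq _ _ _ hc (cinv_pos (c_pos hA hc)).le hz
    rw [sub_mulVec, dotProduct_sub, quad_form, star_dotProduct (A *ᵥ x) y]
    exact main

end per_k

/-- Proposition 2 of the paper: from `R, W₁, …, W_K` positive semidefinite with
`R - Σ W_k ⪰ 0` and `h_kᴴ W_k h_k ≠ 0`, the matrices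
`W̃_k = (W_k h_k)(W_k h_k)ᴴ / (h_kᴴ W_k h_k)` are rank-one positive semidefinite,
preserve `h_kᴴ W_k h_k`, and satisfy `R - Σ W̃_k ⪰ 0`. -/
theorem stmt_6 {n K : ℕ} (R : Matrix (Fin n) (Fin n) ℂ) (hR : R.PosSemidef)
    (W : Fin K → Matrix (Fin n) (Fin n) ℂ) (hW : ∀ k, (W k).PosSemidef)
    (hRW : (R - ∑ k, W k).PosSemidef)
    (h : Fin K → Fin n → ℂ)
    (hh : ∀ k, star (h k) ⬝ᵥ (W k).mulVec (h k) ≠ 0) :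
    (∀ k, ((star (h k) ⬝ᵥ (W k).mulVec (h k))⁻¹ •
        vecMulVec ((W k).mulVec (h k)) (star ((W k).mulVec (h k)))).PosSemidef ∧
      ((star (h k) ⬝ᵥ (W k).mulVec (h k))⁻¹ •
        vecMulVec ((W k).mulVec (h k)) (star ((W k).mulVec (h k)))).rank = 1) ∧
    (∀ k, star (h k) ⬝ᵥ ((star (h k) ⬝ᵥ (W k).mulVec (h k))⁻¹ •
        vecMulVec ((W k).mulVec (h k)) (star ((W k).mulVec (h k)))).mulVec (h k)
      = star (h k) ⬝ᵥ (W k).mulVec (h k)) ∧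
    (R - ∑ k, (star (h k) ⬝ᵥ (W k).mulVec (h k))⁻¹ •
        vecMulVec ((W k).mulVec (h k)) (star ((W k).mulVec (h k)))).PosSemidef := by
  refine ⟨fun k => ⟨Mt_psd (hW k) (hh k), Mt_rank (hW k) (hh k)⟩,
    fun k => Mt_quad (hW k) (hh k), ?_⟩
  have hsum : (∑ k, (W k - (star (h k) ⬝ᵥ (W k).mulVec (h k))⁻¹ •
      vecMulVec ((W k).mulVec (h k)) (star ((W k).mulVec (h k))))).PosSemidef :=
    Finset.sum_induction _ Matrix.PosSemidef (fun a b ha hb => ha.add hb)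
      Matrix.PosSemidef.zero (fun k _ => key_sub (hW k) (hh k))
  have heq : R - ∑ k, (star (h k) ⬝ᵥ (W k).mulVec (h k))⁻¹ •
      vecMulVec ((W k).mulVec (h k)) (star ((W k).mulVec (h k)))
      = (R - ∑ k, W k) + ∑ k, (W k - (star (h k) ⬝ᵥ (W k).mulVec (h k))⁻¹ •
      vecMulVec ((W k).mulVec (h k)) (star ((W k).mulVec (h k)))) := by
    rw [Finset.sum_sub_distrib]
    abel
  rw [heq]
  exact hRW.add hsum
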